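/- arXiv:2001.05786 — 10 statements merged into one kernel-verified Lean document; each statement's English description precedes it below -/
import Mathlib

section
/- The inverse of the initial F_I-algebra structure [η_I, γ_I] : F_I(TI) → TI is a recursive F_I-coalgebra, and for any F_I-algebra of the form [i, δ] : I + FQ → Q arising from an automaton, the unique coalgebra-to-algebra morphism out of it equals the reachability map i^♯ : TI → Q. -/
open CategoryTheory Limits

/-- The functor `F_I = I + F(-)`. -/
noncomputable def FIfun {C : Type*} [Category C] [HasBinaryCoproducts C]
    (F : C ⥤ C) (I : C) : C ⥤ C where
  obj X := I ⨿ F.obj X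
  map f := coprod.map (𝟙 I) (F.map f)

/-- The inverse of the initial `F_I`-algebra structure `[η_I, γ_I] : F_I(TI) → TI` is a
recursive `F_I`-coalgebra, and for any `F_I`-algebra `[i, δ]` coming from an automaton, the
unique coalgebra-to-algebra morphism out of it is the reachability map, i.e. the unique
`F_I`-algebra morphism out of the initial algebra. -/
theorem stmt1 {C : Type*} [Category C] [HasBinaryCoproducts C]
    (F : C ⥤ C) (I : C)
    (TI : C) (a : (FIfun F I).obj TI ⟶ TI)
    (hinit : ∀ (X : C) (x : (FIfun F I).obj X ⟶ X),
      ∃! h : TI ⟶ X, a ≫ h = (FIfun F I).map h ≫ x)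
    (inv : TI ⟶ (FIfun F I).obj TI)
    (hinv1 : a ≫ inv = 𝟙 _) (hinv2 : inv ≫ a = 𝟙 _) :
    (∀ (X : C) (x : (FIfun F I).obj X ⟶ X),
      ∃! f : TI ⟶ X, f = inv ≫ (FIfun F I).map f ≫ x) ∧
    ∀ (Q O : C) (δ : F.obj Q ⟶ Q) (i : I ⟶ Q) (_o : Q ⟶ O)
      (reach : TI ⟶ Q),
      a ≫ reach = (FIfun F I).map reach ≫ coprod.desc i δ →
      ∀ f : TI ⟶ Q, f = inv ≫ (FIfun F I).map f ≫ coprod.desc i δ → f = reach := by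
  have key : ∀ (X : C) (x : (FIfun F I).obj X ⟶ X) (f : TI ⟶ X),
      (f = inv ≫ (FIfun F I).map f ≫ x) ↔ (a ≫ f = (FIfun F I).map f ≫ x) := by
    intro X x f
    constructor
    · intro h
      calc a ≫ f = a ≫ inv ≫ (FIfun F I).map f ≫ x := by rw [← h]
        _ = (FIfun F I).map f ≫ x := by rw [← Category.assoc, hinv1, Category.id_comp]
    · intro h
      calc f = (inv ≫ a) ≫ f := by rw [hinv2, Category.id_comp]
        _ = inv ≫ (FIfun F I).map f ≫ x := by rw [Category.assoc, h]
  constructor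
  · intro X x
    obtain ⟨h, hh, huniq⟩ := hinit X x
    exact ⟨h, (key X x h).mpr hh, fun g hg => huniq g ((key X x g).mp hg)⟩
  · intro Q O δ i _o reach hreach f hf
    obtain ⟨h, hh, huniq⟩ := hinit Q (coprod.desc i δ)
    rw [huniq f ((key _ _ f).mp hf), huniq reach hreach]
end

section
/- For an automaton A and the target automaton A_t, the languages L_{A_t} and L_A (maps TI → O) are equal if and only if for every recursive F_I-coalgebra ρ : S → F_I S the ρ-restricted languages agree: o_t ∘ [i_t, δ_t]^ρ = o ∘ [i, δ]^ρ. -/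
open CategoryTheory Limits

namespace CategoryTheory.Functor

variable {C : Type*} [Category C] (G : C ⥤ C)

def IsRecursiveCoalgebra {S : C} (ρ : S ⟶ G.obj S) : Prop :=
  ∀ (X : C) (x : G.obj X ⟶ X), ∃! f : S ⟶ X, f = ρ ≫ G.map f ≫ x

variable {G}

theorem coalgToAlg_comp_algHom {S A X : C} {ρ : S ⟶ G.obj S} {a : G.obj A ⟶ A}
    {x : G.obj X ⟶ X} {h : S ⟶ A} {r : A ⟶ X} (hh : h = ρ ≫ G.map h ≫ a)
    (hr : a ≫ r = G.map r ≫ x) : h ≫ r = ρ ≫ G.map (h ≫ r) ≫ x := by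
  conv_lhs => rw [hh]
  simp only [Category.assoc, hr, G.map_comp]

theorem IsRecursiveCoalgebra.eq_comp_of_algHom {S A X : C} {ρ : S ⟶ G.obj S}
    (hρ : G.IsRecursiveCoalgebra ρ) {a : G.obj A ⟶ A} {x : G.obj X ⟶ X} {h : S ⟶ A}
    {r : A ⟶ X} {f : S ⟶ X} (hh : h = ρ ≫ G.map h ≫ a) (hr : a ≫ r = G.map r ≫ x)
    (hf : f = ρ ≫ G.map f ≫ x) : f = h ≫ r :=
  (hρ X x).unique hf (coalgToAlg_comp_algHom hh hr)

theorem coalgToAlg_of_algHom {A X : C} {a : G.obj A ⟶ A} {inv : A ⟶ G.obj A}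
    (hinv : inv ≫ a = 𝟙 A) {x : G.obj X ⟶ X} {r : A ⟶ X} (hr : a ≫ r = G.map r ≫ x) :
    r = inv ≫ G.map r ≫ x := by
  rw [← hr, ← Category.assoc, hinv, Category.id_comp]

theorem algHom_of_coalgToAlg {A X : C} {a : G.obj A ⟶ A} {inv : A ⟶ G.obj A}
    (hinv : a ≫ inv = 𝟙 _) {x : G.obj X ⟶ X} {r : A ⟶ X} (hr : r = inv ≫ G.map r ≫ x) :
    a ≫ r = G.map r ≫ x := by
  conv_lhs => rw [hr]
  rw [← Category.assoc, ← Category.assoc, hinv, Category.id_comp]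

theorem isRecursiveCoalgebra_inv_of_initial {A : C} {a : G.obj A ⟶ A}
    (hinit : ∀ (X : C) (x : G.obj X ⟶ X), ∃! h : A ⟶ X, a ≫ h = G.map h ≫ x)
    {inv : A ⟶ G.obj A} (hinv1 : a ≫ inv = 𝟙 _) (hinv2 : inv ≫ a = 𝟙 A) :
    G.IsRecursiveCoalgebra inv := by
  intro X x
  obtain ⟨h, hh, huniq⟩ := hinit X x
  exact ⟨h, coalgToAlg_of_algHom hinv2 hh,
    fun k hk => huniq k (algHom_of_coalgToAlg hinv1 hk)⟩

end CategoryTheory.Functor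

/-- Language equivalence via recursion: the languages of the target automaton and of another
automaton agree (i.e. `reach_t ≫ o_t = reach ≫ o` out of the initial `F_I`-algebra `TI`)
iff for every recursive `F_I`-coalgebra `ρ` the `ρ`-restricted languages agree. -/
theorem stmt5 {C : Type*} [Category C] [HasBinaryCoproducts C]
    (F : C ⥤ C) (I : C)
    (TI : C) (a : (FIfun F I).obj TI ⟶ TI)
    (hinit : ∀ (X : C) (x : (FIfun F I).obj X ⟶ X),
      ∃! h : TI ⟶ X, a ≫ h = (FIfun F I).map h ≫ x)
    (inv : TI ⟶ (FIfun F I).obj TI)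
    (hinv1 : a ≫ inv = 𝟙 _) (hinv2 : inv ≫ a = 𝟙 _)
    (Qt Q O : C) (δt : F.obj Qt ⟶ Qt) (it : I ⟶ Qt) (ot : Qt ⟶ O)
    (δ : F.obj Q ⟶ Q) (i : I ⟶ Q) (o : Q ⟶ O)
    (reacht : TI ⟶ Qt)
    (hreacht : a ≫ reacht = (FIfun F I).map reacht ≫ coprod.desc it δt)
    (reach : TI ⟶ Q)
    (hreach : a ≫ reach = (FIfun F I).map reach ≫ coprod.desc i δ) :
    reacht ≫ ot = reach ≫ o ↔
      ∀ (S : C) (ρ : S ⟶ (FIfun F I).obj S),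
        (∀ (X : C) (x : (FIfun F I).obj X ⟶ X),
          ∃! f : S ⟶ X, f = ρ ≫ (FIfun F I).map f ≫ x) →
        ∀ (f : S ⟶ Qt) (g : S ⟶ Q),
          f = ρ ≫ (FIfun F I).map f ≫ coprod.desc it δt →
          g = ρ ≫ (FIfun F I).map g ≫ coprod.desc i δ →
          f ≫ ot = g ≫ o := by
  constructor
  · intro heq S ρ hρ f g hf hg
    -- both restricted reachability maps factor through the unique morphism `S ⟶ TI`
    replace hρ : (FIfun F I).IsRecursiveCoalgebra ρ := hρ
    obtain ⟨h, hh, -⟩ := hρ TI a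
    rw [hρ.eq_comp_of_algHom hh hreacht hf, hρ.eq_comp_of_algHom hh hreach hg,
      Category.assoc, heq, Category.assoc]
  · intro hall
    -- `TI` with `inv` is itself recursive, and its restricted languages are the full ones
    exact hall TI inv (Functor.isRecursiveCoalgebra_inv_of_initial hinit hinv1 hinv2) reacht
      reach (Functor.coalgToAlg_of_algHom hinv2 hreacht)
      (Functor.coalgToAlg_of_algHom hinv2 hreach)
end

section
/- Given α : S → Q_t and β : Q_t → P, the wrapper ([α, [i_t, δ_t] ∘ F_I α], β) with state-selector [α, [i_t, δ_t] ∘ F_I α] : S + F_I S → Q_t is locally closed with respect to α. -/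
/-! Since `α = inl ≫ α'`, the `M`-part of `α` factors through that of `α'` by the diagonal fill.
Restricting `e` to the two summands of `F_I S ⊆ S + F_I S` gives `i_W` and `lclose`: there
`α'` is `[i_t, δ_t ∘ F α]`, so `e ≫ m = α' ≫ β` yields both equations. -/

open CategoryTheory Limits

theorem exists_comp_eq_of_factorsThrough {C : Type*} [Category C]
    (E M : MorphismProperty C)
    (fill : ∀ {X Y Z W : C} (e : X ⟶ Y) (m : Z ⟶ W) (f : X ⟶ Z) (g : Y ⟶ W),
      E e → M m → f ≫ m = e ≫ g → ∃ d : Y ⟶ Z, e ≫ d = f ∧ d ≫ m = g)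
    {X Y Z W Q : C} {e₁ : X ⟶ Y} {m₁ : Y ⟶ Q} {e₂ : Z ⟶ W} {m₂ : W ⟶ Q} (j : X ⟶ Z)
    (he₁ : E e₁) (hm₂ : M m₂) (h : j ≫ e₂ ≫ m₂ = e₁ ≫ m₁) :
    ∃ g : Y ⟶ W, g ≫ m₂ = m₁ := by
  obtain ⟨g, -, hg⟩ := fill e₁ m₂ (j ≫ e₂) m₁ he₁ hm₂ (by rw [Category.assoc, h])
  exact ⟨g, hg⟩

namespace FIfun

variable {C : Type*} [Category C] [HasBinaryCoproducts C] (F : C ⥤ C) (I : C)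

theorem inl_map_desc {X Y Z : C} (f : X ⟶ Y) (g : I ⟶ Z) (h : F.obj Y ⟶ Z) :
    (coprod.inl : I ⟶ (FIfun F I).obj X) ≫ (FIfun F I).map f ≫ coprod.desc g h = g :=
  (coprod.inl_map_assoc _ _ _).trans ((Category.id_comp _).trans (coprod.inl_desc _ _))

theorem inr_map_desc {X Y Z : C} (f : X ⟶ Y) (g : I ⟶ Z) (h : F.obj Y ⟶ Z) :
    (coprod.inr : F.obj X ⟶ (FIfun F I).obj X) ≫ (FIfun F I).map f ≫ coprod.desc g h =
      F.map f ≫ h :=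
  (coprod.inr_map_assoc _ _ _).trans (congrArg _ (coprod.inr_desc _ _))

end FIfun

theorem stmt7_general {C : Type*} [Category C] [HasBinaryCoproducts C]
    (E M : MorphismProperty C)
    (fill : ∀ {X Y Z W : C} (e : X ⟶ Y) (m : Z ⟶ W) (f : X ⟶ Z) (g : Y ⟶ W),
      E e → M m → f ≫ m = e ≫ g → ∃! d : Y ⟶ Z, e ≫ d = f ∧ d ≫ m = g)
    (F : C ⥤ C) (I : C)
    (Qt : C) (δt : F.obj Qt ⟶ Qt) (it : I ⟶ Qt)
    (S : C) (α : S ⟶ Qt) (P : C) (β : Qt ⟶ P)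
    -- the new state selector `α' = [α, [i_t, δ_t] ∘ F_I α] : S + F_I S ⟶ Q_t`
    (α' : S ⨿ (FIfun F I).obj S ⟶ Qt)
    (hα' : α' = coprod.desc α ((FIfun F I).map α ≫ coprod.desc it δt))
    -- factorisation of α
    (Xα : C) (eα : S ⟶ Xα) (mα : Xα ⟶ Qt)
    (heα : E eα) (hfα : eα ≫ mα = α)
    -- factorisation of α'
    (Xα' : C) (eα' : S ⨿ (FIfun F I).obj S ⟶ Xα') (mα' : Xα' ⟶ Qt)
    (hmα' : M mα') (hfα' : eα' ≫ mα' = α')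
    -- factorisation of τ_W = α' ≫ β through the hypothesis state space H
    (H : C) (e : S ⨿ (FIfun F I).obj S ⟶ H) (m : H ⟶ P)
    (hem : e ≫ m = α' ≫ β) :
    (∃ g : Xα ⟶ Xα', g ≫ mα' = mα) ∧
    (∃ iW : I ⟶ H, iW ≫ m = it ≫ β) ∧
    (∃ lclose : F.obj S ⟶ H, lclose ≫ m = F.map α ≫ δt ≫ β) := by
  -- `FIfun.obj` is not reducible, so the summand inclusions are matched up to defeq by `exact`
  -- rather than by `rw`.
  have hτ_inr : ∀ {X : C} (j : X ⟶ (FIfun F I).obj S),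
      (j ≫ coprod.inr ≫ e) ≫ m = (j ≫ (FIfun F I).map α ≫ coprod.desc it δt) ≫ β := by
    intro X j
    simp only [Category.assoc, hem, hα', coprod.inr_desc_assoc]
  refine ⟨?_, ⟨_, (hτ_inr coprod.inl).trans ?_⟩, ⟨_, (hτ_inr coprod.inr).trans ?_⟩⟩
  · exact exists_comp_eq_of_factorsThrough E M
      (fun e m f g he hm h => (fill e m f g he hm h).exists) coprod.inl heα hmα'
      (by rw [hfα', hfα, hα', coprod.inl_desc])
  · exact congrArg (· ≫ β) (FIfun.inl_map_desc F I α it δt)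
  · exact (congrArg (· ≫ β) (FIfun.inr_map_desc F I α it δt)).trans (Category.assoc _ _ _)

/-- The wrapper `([α, [i_t, δ_t] ∘ F_I α], β)` is locally closed with respect to `α`:
the subobject `α^◁` is below the `M`-part of the new selector, and there are morphisms
`i_W : I → H_W` and `lclose : FS → H_W` satisfying the local-closedness equations. -/
theorem stmt7 {C : Type*} [Category C] [HasBinaryCoproducts C]
    (E M : MorphismProperty C)
    (hE : ∀ {X Y : C} (f : X ⟶ Y), E f → Epi f)
    (hM : ∀ {X Y : C} (f : X ⟶ Y), M f → Mono f)
    (fill : ∀ {X Y Z W : C} (e : X ⟶ Y) (m : Z ⟶ W) (f : X ⟶ Z) (g : Y ⟶ W),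
      E e → M m → f ≫ m = e ≫ g → ∃! d : Y ⟶ Z, e ≫ d = f ∧ d ≫ m = g)
    (F : C ⥤ C) (I O : C)
    (Qt : C) (δt : F.obj Qt ⟶ Qt) (it : I ⟶ Qt) (ot : Qt ⟶ O)
    (S : C) (α : S ⟶ Qt) (P : C) (β : Qt ⟶ P)
    -- the new state selector `α' = [α, [i_t, δ_t] ∘ F_I α] : S + F_I S ⟶ Q_t`
    (α' : S ⨿ (FIfun F I).obj S ⟶ Qt)
    (hα' : α' = coprod.desc α ((FIfun F I).map α ≫ coprod.desc it δt))
    -- factorisation of α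
    (Xα : C) (eα : S ⟶ Xα) (mα : Xα ⟶ Qt)
    (heα : E eα) (hmα : M mα) (hfα : eα ≫ mα = α)
    -- factorisation of α'
    (Xα' : C) (eα' : S ⨿ (FIfun F I).obj S ⟶ Xα') (mα' : Xα' ⟶ Qt)
    (heα' : E eα') (hmα' : M mα') (hfα' : eα' ≫ mα' = α')
    -- factorisation of τ_W = α' ≫ β through the hypothesis state space H
    (H : C) (e : S ⨿ (FIfun F I).obj S ⟶ H) (m : H ⟶ P)
    (he : E e) (hm : M m) (hem : e ≫ m = α' ≫ β) :
    (∃ g : Xα ⟶ Xα', g ≫ mα' = mα) ∧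
    (∃ iW : I ⟶ H, iW ≫ m = it ≫ β) ∧
    (∃ lclose : F.obj S ⟶ H, lclose ≫ m = F.map α ≫ δt ≫ β) :=
  stmt7_general E M fill F I Qt δt it S α P β α' hα' Xα eα mα heα hfα Xα' eα' mα' hmα' hfα' H e m
    hem
end

section
/- In Set, let T be the free F-algebra monad of a functor F, and let X be a T-algebra with structure map extending via (-)^♯. For any p : I → X and any context c ∈ T(I + X), the map [p, 1_{[p, id_X]^♯(c)}]^♯ : T(I + 1) → X equals [p, id_X]^♯ ∘ μ̂_X ∘ T(id_I + 1_c), where μ̂ is the multiplication of the monad T(I + (-)) and 1_c : 1 → T(I+X) picks out c. -/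
/-! With `g^♯ = a ∘ T g`, naturality of `μ` and the associativity law of the algebra give
`g^♯ ∘ μ ∘ T h = (g^♯ ∘ h)^♯`, and the unit law gives `g^♯ ∘ η = g`. Hence the right-hand side
is the extension of `[p, id]^♯ ∘ [η ∘ κ₁, id] ∘ (id + 1_c)`, a map `I + 1 → X` that agrees with
`[p, 1_{[p, id]^♯ c}]` on both summands. -/

open CategoryTheory

universe u

namespace CategoryTheory.Monad.Algebra

variable {T : Monad (Type u)} (X : T.Algebra) {Y Z : Type u}

theorem a_map_η (g : Z → X.A) (z : Z) :
    X.a (T.map (TypeCat.ofHom g) (T.η.app Z z)) = g z := by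
  have hη := ConcreteCategory.congr_hom (T.η.naturality (TypeCat.ofHom g)) z
  have hunit := ConcreteCategory.congr_hom X.unit (g z)
  simp only [CategoryTheory.comp_apply] at hη hunit
  rw [← hη]
  exact hunit

theorem a_map_μ_map (g : Z → X.A) (h : Y → T.obj Z) (e : T.obj Y) :
    X.a (T.map (TypeCat.ofHom g) (T.μ.app Z (T.map (TypeCat.ofHom h) e))) =
      X.a (T.map (TypeCat.ofHom fun y => X.a (T.map (TypeCat.ofHom g) (h y))) e) := by
  have hμ := ConcreteCategory.congr_hom (T.μ.naturality (TypeCat.ofHom g)) (T.map (TypeCat.ofHom h) e)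
  have hassoc := ConcreteCategory.congr_hom X.assoc
  simp only [CategoryTheory.comp_apply, Functor.comp_map] at hμ hassoc
  rw [← hμ, hassoc, ← Functor.map_comp_apply, ← Functor.map_comp_apply]
  rfl

end CategoryTheory.Monad.Algebra

theorem stmt9_general (T : CategoryTheory.Monad (Type u))
    (X : T.Algebra) (I : Type u) (p : I → X.A)
    (c : T.obj (I ⊕ X.A)) :
    ∀ e : T.obj (I ⊕ PUnit.{u + 1}),
      X.a (T.map (TypeCat.ofHom (Sum.elim p fun _ => X.a (T.map (TypeCat.ofHom (Sum.elim p id)) c))) e) =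
        X.a (T.map (TypeCat.ofHom (Sum.elim p id))
          (T.μ.app (I ⊕ X.A)
            (T.map (TypeCat.ofHom (Sum.elim (fun i => T.η.app (I ⊕ X.A) (Sum.inl i)) id))
              (T.map (TypeCat.ofHom (Sum.map id fun _ : PUnit.{u + 1} => c)) e)))) := by
  intro e
  rw [← Functor.map_comp_apply]
  refine Eq.trans ?_ (X.a_map_μ_map (Sum.elim p id)
    (Sum.elim (fun i => T.η.app _ (Sum.inl i)) id ∘ Sum.map id fun _ => c) e).symm
  refine congrArg (fun f => X.a (T.map (TypeCat.ofHom f) e)) (funext fun y => ?_)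
  rcases y with i | _
  · exact (X.a_map_η (Sum.elim p id) (Sum.inl i)).symm
  · rfl

/-- For the free `F`-algebra monad `T` on `Set`, a `T`-algebra `X`, `p : I → X` and a context
`c ∈ T(I + X)`, the extension `[p, 1_{[p, id_X]^♯(c)}]^♯ : T(I + 1) → X` equals
`[p, id_X]^♯ ∘ μ̂_X ∘ T(id_I + 1_c)`, where `μ̂_X = μ_{I+X} ∘ T[η_{I+X} ∘ κ₁, id]` is the
multiplication of the monad `T(I + (-))`, and `f^♯ = a ∘ T f` for the algebra structure `a`. -/
theorem stmt9 (F : Type u ⥤ Type u) (T : CategoryTheory.Monad (Type u))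
    (γ : ∀ X : Type u, F.obj (T.obj X) → T.obj X)
    (hγnat : ∀ (X Y : Type u) (f : X → Y) (b : F.obj (T.obj X)),
      γ Y (F.map (T.map (TypeCat.ofHom f)) b) = T.map (TypeCat.ofHom f) (γ X b))
    (hfree : ∀ (X Z : Type u) (z : F.obj Z → Z) (f : X → Z),
      ∃! g : T.obj X → Z,
        (∀ a, g (T.η.app X a) = f a) ∧ (∀ b, g (γ X b) = z (F.map (TypeCat.ofHom g) b)))
    (X : T.Algebra) (I : Type u) (p : I → X.A)
    (c : T.obj (I ⊕ X.A)) :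
    ∀ e : T.obj (I ⊕ PUnit.{u + 1}),
      X.a (T.map (TypeCat.ofHom (Sum.elim p fun _ => X.a (T.map (TypeCat.ofHom (Sum.elim p id)) c))) e) =
        X.a (T.map (TypeCat.ofHom (Sum.elim p id))
          (T.μ.app (I ⊕ X.A)
            (T.map (TypeCat.ofHom (Sum.elim (fun i => T.η.app (I ⊕ X.A) (Sum.inl i)) id))
              (T.map (TypeCat.ofHom (Sum.map id fun _ : PUnit.{u + 1} => c)) e)))) :=
  stmt9_general T X I p c
end

section
/- Let A_t = (Q_t, δ_t, i_t, o_t) be a Set automaton for a functor F with free monad T, and let S ⊆ TI with inclusion j, and E ⊆ T(I+1). With α_S the restricted reachability map and β_E(q) = o_t ∘ [i_t, 1_q]^♯ restricted to E, the table entry satisfies (β_E ∘ α_S)(s) = L_{A_t} ∘ μ_I ∘ T[η_I, 1_s] (as a function E → O), where L_{A_t} = o_t ∘ i_t^♯ : TI → O. -/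
/-!
Both `[i_t, 1_q]^♯` with `q = i_t^♯ s` and `i_t^♯ ∘ μ_I ∘ T[η_I, 1_s]` are `F`-algebra morphisms
`T(I + 1) → Q_t` that agree on generators, so they coincide by freeness of `T(I + 1)`.
-/

open CategoryTheory

universe u

namespace FreeAlgebraMonad

variable {F : Type u ⥤ Type u} {T : Monad (Type u)}

def IsAlgHom (γ : ∀ X : Type u, F.obj (T.obj X) → T.obj X) {X Z : Type u}
    (z : F.obj Z → Z) (g : T.obj X → Z) : Prop :=
  ∀ b, g (γ X b) = z (F.map (TypeCat.ofHom g) b)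

def bind {X Y : Type u} (f : X → T.obj Y) (x : T.obj X) : T.obj Y :=
  T.μ.app Y (T.map (TypeCat.ofHom f) x)

theorem bind_η {X Y : Type u} (f : X → T.obj Y) (a : X) : bind f (T.η.app X a) = f a := by
  have hnat : T.map (TypeCat.ofHom f) (T.η.app X a) = T.η.app (T.obj Y) (f a) :=
    (ConcreteCategory.congr_hom (T.η.naturality (TypeCat.ofHom f)) a).symm
  rw [bind, hnat]
  exact ConcreteCategory.congr_hom (T.left_unit Y) (f a)

theorem IsAlgHom.comp_bind {γ : ∀ X : Type u, F.obj (T.obj X) → T.obj X}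
    (hγnat : ∀ (X Y : Type u) (f : X → Y) (b : F.obj (T.obj X)),
      γ Y (F.map (T.map (TypeCat.ofHom f)) b) = T.map (TypeCat.ofHom f) (γ X b))
    (hγμ : ∀ (X : Type u) (b : F.obj (T.obj (T.obj X))),
      T.μ.app X (γ (T.obj X) b) = γ X (F.map (T.μ.app X) b))
    {X Y Z : Type u} {z : F.obj Z → Z} {g : T.obj Y → Z} (hg : IsAlgHom γ z g)
    (f : X → T.obj Y) : IsAlgHom γ z (g ∘ bind f) := by
  intro b
  simp only [Function.comp_apply, bind, ← hγnat, hγμ, ← Functor.map_comp_apply]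
  rw [hg, ← Functor.map_comp_apply]
  rfl

theorem IsAlgHom.ext {γ : ∀ X : Type u, F.obj (T.obj X) → T.obj X}
    (hfree : ∀ (X Z : Type u) (z : F.obj Z → Z) (f : X → Z),
      ∃! g : T.obj X → Z,
        (∀ a, g (T.η.app X a) = f a) ∧ (∀ b, g (γ X b) = z (F.map (TypeCat.ofHom g) b)))
    {X Z : Type u} {z : F.obj Z → Z} {g₁ g₂ : T.obj X → Z}
    (hg₁ : IsAlgHom γ z g₁) (hg₂ : IsAlgHom γ z g₂)
    (hη : ∀ a, g₁ (T.η.app X a) = g₂ (T.η.app X a)) : g₁ = g₂ := by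
  obtain ⟨g, -, huniq⟩ := hfree X Z z (g₂ ∘ T.η.app X)
  exact (huniq g₁ ⟨hη, hg₁⟩).trans (huniq g₂ ⟨fun _ => rfl, hg₂⟩).symm

end FreeAlgebraMonad

open FreeAlgebraMonad

/-- Computing observation-table entries of a contextual wrapper: for a `Set` automaton
`(Q_t, δ_t, i_t, o_t)` over `F` with free `F`-algebra monad `T`, reachability map `reach = i_t^♯`,
context maps `sh q = [i_t, 1_q]^♯` and wrapper maps `α_S(s) = reach(s)`,
`β_E(q)(e) = o_t(sh q e)`, the table entry satisfies
`(β_E ∘ α_S)(s)(e) = (L_{A_t} ∘ μ_I ∘ T[η_I, 1_s])(e)` where `L_{A_t} = o_t ∘ i_t^♯`. -/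
theorem stmt10 (F : Type u ⥤ Type u) (T : CategoryTheory.Monad (Type u))
    (γ : ∀ X : Type u, F.obj (T.obj X) → T.obj X)
    (hγnat : ∀ (X Y : Type u) (f : X → Y) (b : F.obj (T.obj X)),
      γ Y (F.map (T.map (TypeCat.ofHom f)) b) = T.map (TypeCat.ofHom f) (γ X b))
    (hγμ : ∀ (X : Type u) (b : F.obj (T.obj (T.obj X))),
      T.μ.app X (γ (T.obj X) b) = γ X (F.map (T.μ.app X) b))
    (hfree : ∀ (X Z : Type u) (z : F.obj Z → Z) (f : X → Z),
      ∃! g : T.obj X → Z,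
        (∀ a, g (T.η.app X a) = f a) ∧ (∀ b, g (γ X b) = z (F.map (TypeCat.ofHom g) b)))
    (I O Qt : Type u)
    (δt : F.obj Qt → Qt) (it : I → Qt) (ot : Qt → O)
    -- the reachability map `i_t^♯`
    (reach : T.obj I → Qt)
    (hreach1 : ∀ a, reach (T.η.app I a) = it a)
    (hreach2 : ∀ b, reach (γ I b) = δt (F.map (TypeCat.ofHom reach) b))
    -- the extensions `[i_t, 1_q]^♯ : T(I + 1) → Q_t`
    (sh : Qt → T.obj (I ⊕ PUnit.{u + 1}) → Qt)
    (hsh1 : ∀ q a, sh q (T.η.app (I ⊕ PUnit.{u + 1}) a) = Sum.elim it (fun _ => q) a)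
    (hsh2 : ∀ q b, sh q (γ (I ⊕ PUnit.{u + 1}) b) = δt (F.map (TypeCat.ofHom (sh q)) b))
    (S : Set (T.obj I)) (E : Set (T.obj (I ⊕ PUnit.{u + 1}))) :
    ∀ (s : S) (e : E),
      ot (sh (reach (s : T.obj I)) (e : T.obj (I ⊕ PUnit.{u + 1}))) =
        ot (reach (T.μ.app I
          (T.map (TypeCat.ofHom (Sum.elim (T.η.app I) (fun _ : PUnit.{u + 1} => (s : T.obj I))))
            (e : T.obj (I ⊕ PUnit.{u + 1}))))) := by
  intro s e
  have hsh_eq : sh (reach s) = reach ∘ bind (Sum.elim (T.η.app I) fun _ => (s : T.obj I)) := by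
    refine IsAlgHom.ext hfree (hsh2 _) (IsAlgHom.comp_bind hγnat hγμ hreach2 _) ?_
    intro a
    rw [hsh1, Function.comp_apply]
    erw [bind_η]
    cases a <;> simp [hreach1]
  rw [hsh_eq]
  rfl
end

section
/- Given finite S ⊆ TI and E ⊆ T(I+1), letting S' = S ∪ {η_I(x) : x ∈ I} ∪ {(γ_I ∘ Fj)(x) : x ∈ FS} (where j : S → TI is inclusion), the contextual wrapper (α_{S'}, β_E) is locally closed with respect to α_S; moreover if α_S = [i_t, δ_t]^ρ for a recursive coalgebra ρ : S → F_I S, then there is a recursive coalgebra ρ' : S' → F_I S' with α_{S'} = [i_t, δ_t]^{ρ'}. -/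
/-!
Every element of `S'` is an element of `S`, a leaf `η x`, or a one-step term `γ (F j y)`, and
`reach` sends these to `α_S s`, `i_t x` and `δ_t (F α_S y)`; this gives local closedness. The
coalgebra `ρ'` keeps `ρ` on `S` and sends `η x ↦ inl x`, `γ (F j y) ↦ inr y`. It factors through
`I ⊕ F S`, so its recursiveness is inherited from that of `ρ`.
-/

open CategoryTheory

universe u

/-- Recursiveness of a coalgebra `ρ : S → I ⊕ F S` for the functor `F_I X = I ⊕ F X` on `Set`. -/
def RecursiveSet (F : Type u ⥤ Type u) (I : Type u) {S : Type u}
    (ρ : S → I ⊕ F.obj S) : Prop :=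
  ∀ (X : Type u) (x : I ⊕ F.obj X → X),
    ∃! f : S → X, ∀ s, f s = x (Sum.map id (F.map (TypeCat.ofHom f)) (ρ s))

theorem sumMap_functor_map_comp (F : Type u ⥤ Type u) {I A B C : Type u} (g : A → B) (h : B → C)
    (z : I ⊕ F.obj A) :
    Sum.map id (F.map (TypeCat.ofHom h)) (Sum.map id (F.map (TypeCat.ofHom g)) z) =
      Sum.map id (F.map (TypeCat.ofHom (h ∘ g))) z := by
  cases z with
  | inl i => rfl
  | inr a => exact congrArg Sum.inr (F.map_comp_apply (TypeCat.ofHom g) (TypeCat.ofHom h) a).symm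

theorem RecursiveSet.extend {F : Type u ⥤ Type u} {I S S' : Type u} {ρ : S → I ⊕ F.obj S}
    (hρ : RecursiveSet F I ρ) (ι : S → S') (σ : S' → I ⊕ F.obj S) (hσ : ∀ s, σ (ι s) = ρ s) :
    RecursiveSet F I (fun s' => Sum.map id (F.map (TypeCat.ofHom ι)) (σ s')) := by
  intro X x
  obtain ⟨f, hf, hf_unique⟩ := hρ X x
  simp only [sumMap_functor_map_comp]
  -- any solution `g` on `S'` is determined by its restriction `g ∘ ι`, which solves `ρ`
  have hf_ι : (fun s' => x (Sum.map id (F.map (TypeCat.ofHom f)) (σ s'))) ∘ ι = f := by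
    funext s
    simp only [Function.comp_apply, hσ, ← hf]
  refine ⟨fun s' => x (Sum.map id (F.map (TypeCat.ofHom f)) (σ s')), fun s' => by rw [hf_ι], ?_⟩
  intro g hg
  have hg_ι : g ∘ ι = f := hf_unique _ fun s => by
    simp only [Function.comp_apply, hg (ι s), hσ]
  funext s'
  rw [hg s', hg_ι]

theorem stmt12_general (F : Type u ⥤ Type u)
    (T : CategoryTheory.Monad (Type u))
    (γ : ∀ X : Type u, F.obj (T.obj X) → T.obj X)
    (I O Qt : Type u)
    (δt : F.obj Qt → Qt) (it : I → Qt)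
    (reach : T.obj I → Qt)
    (hreach1 : ∀ a, reach (T.η.app I a) = it a)
    (hreach2 : ∀ b, reach (γ I b) = δt (F.map (TypeCat.ofHom reach) b))
    (S : Set (T.obj I))
    (E : Set (T.obj (I ⊕ PUnit.{u + 1})))
    (βE : Qt → (E → O))
    (S' : Set (T.obj I))
    (hS' : S' = S ∪ Set.range (fun x : I => T.η.app I x) ∪
      Set.range (fun y : F.obj S => γ I (F.map (TypeCat.ofHom (fun s : S => (s : T.obj I))) y))) :
    -- (α_{S'}, β_E) is locally closed w.r.t. α_S
    ((Set.range (fun s : S => reach (s : T.obj I)) ⊆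
        Set.range (fun s : S' => reach (s : T.obj I))) ∧
      (∃ iW : I → Set.range (fun s : S' => βE (reach (s : T.obj I))),
        ∀ x, (iW x : E → O) = βE (it x)) ∧
      (∃ lclose : F.obj S → Set.range (fun s : S' => βE (reach (s : T.obj I))),
        ∀ y, (lclose y : E → O) =
          βE (δt (F.map (TypeCat.ofHom (fun s : S => reach (s : T.obj I))) y)))) ∧
    -- and if α_S comes from a recursive coalgebra then so does α_{S'}
    (∀ ρ : S → I ⊕ F.obj S, RecursiveSet F I ρ →
      (∀ s : S, reach (s : T.obj I) =
        Sum.elim it δt (Sum.map id (F.map (TypeCat.ofHom (fun t : S => reach (t : T.obj I)))) (ρ s))) →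
      ∃ ρ' : S' → I ⊕ F.obj S', RecursiveSet F I ρ' ∧
        ∀ s : S', reach (s : T.obj I) =
          Sum.elim it δt (Sum.map id (F.map (TypeCat.ofHom (fun t : S' => reach (t : T.obj I)))) (ρ' s))) := by
  have hS_sub : S ⊆ S' := hS' ▸ fun _ hs => Or.inl (Or.inl hs)
  have hη_mem : ∀ x, T.η.app I x ∈ S' := hS' ▸ fun x => Or.inl (Or.inr ⟨x, rfl⟩)
  have hγ_mem : ∀ y, γ I (F.map (TypeCat.ofHom (fun s : S => (s : T.obj I))) y) ∈ S' :=
    hS' ▸ fun y => Or.inr ⟨y, rfl⟩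
  have hreach_γ : ∀ y, reach (γ I (F.map (TypeCat.ofHom (fun s : S => (s : T.obj I))) y)) =
      δt (F.map (TypeCat.ofHom (fun s : S => reach (s : T.obj I))) y) := fun y => by
    rw [hreach2, ← F.map_comp_apply]
    rfl
  refine ⟨⟨?_, ⟨fun x => ⟨_, ⟨_, hη_mem x⟩, rfl⟩, fun x => by simp [hreach1]⟩,
    ⟨fun y => ⟨_, ⟨_, hγ_mem y⟩, rfl⟩, fun y => by simp [hreach_γ]⟩⟩, ?_⟩
  · rintro _ ⟨s, rfl⟩
    exact ⟨⟨s, hS_sub s.2⟩, rfl⟩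
  intro ρ hρ hρ_reach
  have hσ : ∀ s' : S', ∃ z : I ⊕ F.obj S, (∀ h : (s' : T.obj I) ∈ S, z = ρ ⟨s', h⟩) ∧
      reach s' = Sum.elim it δt (Sum.map id (F.map (TypeCat.ofHom (fun t : S => reach t))) z) := by
    rintro ⟨v, hv⟩
    by_cases hvS : v ∈ S
    · exact ⟨ρ ⟨v, hvS⟩, fun _ => rfl, hρ_reach ⟨v, hvS⟩⟩
    rw [hS'] at hv
    rcases hv with (hv | ⟨x, rfl⟩) | ⟨y, rfl⟩
    · exact absurd hv hvS
    · exact ⟨Sum.inl x, fun h => absurd h hvS, hreach1 x⟩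
    · exact ⟨Sum.inr y, fun h => absurd h hvS, hreach_γ y⟩
  choose σ hσ_ρ hσ_reach using hσ
  refine ⟨_, hρ.extend (Set.inclusion hS_sub) σ fun s => hσ_ρ _ s.2, fun s' => ?_⟩
  rw [sumMap_functor_map_comp]
  exact hσ_reach s'

/-- Extending a finite `S ⊆ TI` by all `η_I`-leaves and one-step `γ_I ∘ Fj`-successors yields a
set `S'` such that the contextual wrapper `(α_{S'}, β_E)` is locally closed w.r.t. `α_S`;
moreover, if `α_S` is induced by a recursive coalgebra, then so is `α_{S'}`. -/
theorem stmt12 (F : Type u ⥤ Type u)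
    (hFfin : ∀ X : Type u, Finite X → Finite (F.obj X))
    (T : CategoryTheory.Monad (Type u))
    (γ : ∀ X : Type u, F.obj (T.obj X) → T.obj X)
    (hγnat : ∀ (X Y : Type u) (f : X → Y) (b : F.obj (T.obj X)),
      γ Y (F.map (T.map (TypeCat.ofHom f)) b) = T.map (TypeCat.ofHom f) (γ X b))
    (hfree : ∀ (X Z : Type u) (z : F.obj Z → Z) (f : X → Z),
      ∃! g : T.obj X → Z,
        (∀ a, g (T.η.app X a) = f a) ∧ (∀ b, g (γ X b) = z (F.map (TypeCat.ofHom g) b)))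
    (I O Qt : Type u) (hI : Finite I)
    (δt : F.obj Qt → Qt) (it : I → Qt) (ot : Qt → O)
    (reach : T.obj I → Qt)
    (hreach1 : ∀ a, reach (T.η.app I a) = it a)
    (hreach2 : ∀ b, reach (γ I b) = δt (F.map (TypeCat.ofHom reach) b))
    (sh : Qt → T.obj (I ⊕ PUnit.{u + 1}) → Qt)
    (hsh1 : ∀ q a, sh q (T.η.app (I ⊕ PUnit.{u + 1}) a) = Sum.elim it (fun _ => q) a)
    (hsh2 : ∀ q b, sh q (γ (I ⊕ PUnit.{u + 1}) b) = δt (F.map (TypeCat.ofHom (sh q)) b))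
    (S : Set (T.obj I)) (hS : S.Finite)
    (E : Set (T.obj (I ⊕ PUnit.{u + 1}))) (hE : E.Finite)
    (βE : Qt → (E → O)) (hβE : ∀ q (e : E), βE q e = ot (sh q (e : T.obj (I ⊕ PUnit.{u+1}))))
    (S' : Set (T.obj I))
    (hS' : S' = S ∪ Set.range (fun x : I => T.η.app I x) ∪
      Set.range (fun y : F.obj S => γ I (F.map (TypeCat.ofHom (fun s : S => (s : T.obj I))) y))) :
    -- (α_{S'}, β_E) is locally closed w.r.t. α_S
    ((Set.range (fun s : S => reach (s : T.obj I)) ⊆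
        Set.range (fun s : S' => reach (s : T.obj I))) ∧
      (∃ iW : I → Set.range (fun s : S' => βE (reach (s : T.obj I))),
        ∀ x, (iW x : E → O) = βE (it x)) ∧
      (∃ lclose : F.obj S → Set.range (fun s : S' => βE (reach (s : T.obj I))),
        ∀ y, (lclose y : E → O) =
          βE (δt (F.map (TypeCat.ofHom (fun s : S => reach (s : T.obj I))) y)))) ∧
    -- and if α_S comes from a recursive coalgebra then so does α_{S'}
    (∀ ρ : S → I ⊕ F.obj S, RecursiveSet F I ρ →
      (∀ s : S, reach (s : T.obj I) =
        Sum.elim it δt (Sum.map id (F.map (TypeCat.ofHom (fun t : S => reach (t : T.obj I)))) (ρ s))) →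
      ∃ ρ' : S' → I ⊕ F.obj S', RecursiveSet F I ρ' ∧
        ∀ s : S', reach (s : T.obj I) =
          Sum.elim it δt (Sum.map id (F.map (TypeCat.ofHom (fun t : S' => reach (t : T.obj I)))) (ρ' s))) :=
  stmt12_general F T γ I O Qt δt it reach hreach1 hreach2 S E βE S' hS'
end

section
/- Let F be a finitary Set endofunctor preserving finite sets, I finite. Then for any two automata A_t and A over F (with input I, output O), the languages L_{A_t}, L_A : TI → O are equal if and only if for every recursive coalgebra ρ : S → F_I S with S finite, the ρ-restricted languages agree: o_t ∘ [i_t, δ_t]^ρ = o ∘ [i, δ]^ρ. -/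
/-!
A recursive coalgebra `ρ` has a unique coalgebra-to-algebra morphism `e` into `TI`, and composing
`e` with the reachability map of an automaton gives the unique one into the automaton; so the
`ρ`-restricted language is the language restricted along `e`. Conversely, the stages `F_Iⁿ ∅` of
the initial chain are finite recursive coalgebras whose morphisms into `TI` jointly cover `TI`:
as `F` is finitary, the union of their images is closed under the algebra structure, hence is all
of `TI` by initiality.
-/

open CategoryTheory

universe u

open Limits Function

theorem CategoryTheory.Functor.map_surjective_of_types {F : Type u ⥤ Type v} {X Y : Type u}
    {f : X → Y} (hf : Surjective f) : Surjective (F.map (TypeCat.ofHom f)) := by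
  have : IsSplitEpi (TypeCat.ofHom f) := (isSplitEpi_iff_surjective _).2 hf
  exact surjective_of_epi (F.map (TypeCat.ofHom f))

/-- The union of the images of `c` is a quotient of `colimit G`; `F` preserves this colimit and,
like every functor on `Type`, surjections. -/
theorem CategoryTheory.Functor.exists_map_eq_of_mem_iUnion_range {F : Type u ⥤ Type v}
    {J : Type} [SmallCategory J] [PreservesColimitsOfShape J F] {G : J ⥤ Type u} (c : Cocone G)
    (w : F.obj (⋃ j, Set.range (c.ι.app j))) :
    ∃ j v, F.map (TypeCat.ofHom Subtype.val) w = F.map (c.ι.app j) v := by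
  have hdesc (j : J) (x : G.obj j) : colimit.desc G c (colimit.ι G j x) = c.ι.app j x := by simp
  let r : colimit G → ⋃ j, Set.range (c.ι.app j) := fun z => ⟨colimit.desc G c z, by
    obtain ⟨j, x, rfl⟩ := Types.jointly_surjective' z
    exact Set.mem_iUnion.2 ⟨j, x, (hdesc j x).symm⟩⟩
  have hr : Surjective r := by
    rintro ⟨-, hy⟩
    obtain ⟨j, x, rfl⟩ := Set.mem_iUnion.1 hy
    exact ⟨colimit.ι G j x, Subtype.ext (hdesc j x)⟩
  obtain ⟨w₀, rfl⟩ := Functor.map_surjective_of_types hr w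
  obtain ⟨j, v, rfl⟩ :=
    Types.jointly_surjective _ (isColimitOfPreserves F (colimit.isColimit G)) w₀
  refine ⟨j, v, ?_⟩
  simp only [Functor.mapCocone_ι_app, colimit.cocone_ι, ← Functor.map_comp_apply]
  have hcomp : (colimit.ι G j ≫ TypeCat.ofHom r) ≫ TypeCat.ofHom Subtype.val = c.ι.app j := by
    ext x
    exact hdesc j x
  rw [hcomp]

section FIAlgebras

variable {F : Type u ⥤ Type u} {I : Type u}

variable (F I) in
/-- The action `F_I f = id_I + F f` of the functor `F_I = I + F(-)` on a map `f`. -/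
def mapFI {X Y : Type u} (f : X → Y) : I ⊕ F.obj X → I ⊕ F.obj Y :=
  Sum.map id (F.map (TypeCat.ofHom f))

theorem mapFI_id {X : Type u} (z : I ⊕ F.obj X) : mapFI F I id z = z := by
  rcases z with i | w
  · rfl
  · exact congrArg Sum.inr (F.map_id_apply _ w)

theorem mapFI_comp {X Y Z : Type u} (f : X → Y) (g : Y → Z) :
    mapFI F I (g ∘ f) = mapFI F I g ∘ mapFI F I f := by
  funext z
  rcases z with i | w
  · rfl
  · exact congrArg Sum.inr (F.map_comp_apply (TypeCat.ofHom f) (TypeCat.ofHom g) w)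

def IsAlgHom {X Y : Type u} (x : I ⊕ F.obj X → X) (y : I ⊕ F.obj Y → Y) (h : X → Y) : Prop :=
  ∀ z, h (x z) = y (mapFI F I h z)

def IsCoalgToAlgHom {S X : Type u} (ρ : S → I ⊕ F.obj S) (x : I ⊕ F.obj X → X) (f : S → X) :
    Prop :=
  ∀ s, f s = x (mapFI F I f (ρ s))

def IsInitialAlg {A : Type u} (a : I ⊕ F.obj A → A) : Prop :=
  ∀ (X : Type u) (x : I ⊕ F.obj X → X), ∃! h : A → X, IsAlgHom a x h

theorem IsAlgHom.id {X : Type u} (x : I ⊕ F.obj X → X) : IsAlgHom x x id := fun z => by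
  rw [mapFI_id]; rfl

theorem IsAlgHom.comp {X Y Z : Type u} {x : I ⊕ F.obj X → X} {y : I ⊕ F.obj Y → Y}
    {z : I ⊕ F.obj Z → Z} {f : X → Y} {g : Y → Z} (hg : IsAlgHom y z g) (hf : IsAlgHom x y f) :
    IsAlgHom x z (g ∘ f) := fun w => by
  rw [comp_apply, hf, hg, mapFI_comp, comp_apply]

theorem IsCoalgToAlgHom.comp {S X Y : Type u} {ρ : S → I ⊕ F.obj S} {x : I ⊕ F.obj X → X}
    {y : I ⊕ F.obj Y → Y} {f : S → X} {m : X → Y} (hf : IsCoalgToAlgHom ρ x f)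
    (hm : IsAlgHom x y m) : IsCoalgToAlgHom ρ y (m ∘ f) := fun s => by
  rw [comp_apply, hf, hm, mapFI_comp, comp_apply]

theorem RecursiveSet.eq_comp {S A X : Type u} {ρ : S → I ⊕ F.obj S} (hρ : RecursiveSet F I ρ)
    {a : I ⊕ F.obj A → A} {x : I ⊕ F.obj X → X} {e : S → A} {m : A → X} {f : S → X}
    (he : IsCoalgToAlgHom ρ a e) (hm : IsAlgHom a x m) (hf : IsCoalgToAlgHom ρ x f) :
    f = m ∘ e :=
  (hρ X x).unique hf (he.comp hm)

theorem IsInitialAlg.eq_id {A : Type u} {a : I ⊕ F.obj A → A} (ha : IsInitialAlg a) {h : A → A}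
    (hh : IsAlgHom a a h) : h = id :=
  (ha A a).unique hh (IsAlgHom.id a)

theorem IsInitialAlg.mem_of_closed {A : Type u} {a : I ⊕ F.obj A → A} (ha : IsInitialAlg a)
    {U : Set A} (hU : ∀ z : I ⊕ F.obj U, a (mapFI F I Subtype.val z) ∈ U) (t : A) : t ∈ U := by
  obtain ⟨h, hh, -⟩ := ha U fun z => ⟨_, hU z⟩
  have hval : IsAlgHom (fun z => ⟨_, hU z⟩) a (Subtype.val : U → A) := fun _ => rfl
  have ht : (h t).1 = t := congrFun (ha.eq_id (hval.comp hh)) t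
  exact ht ▸ (h t).2

variable (F I) in
/-- The initial chain `∅, F_I ∅, F_I² ∅, …`; an `abbrev`, so that `initialChain F I (n + 1)` is
reducibly `I ⊕ F.obj (initialChain F I n)`. -/
abbrev initialChain : ℕ → Type u
  | 0 => PEmpty
  | n + 1 => I ⊕ F.obj (initialChain n)

namespace initialChain

variable (F I) in
/-- The connecting map `F_Iⁿ ∅ → F_Iⁿ⁺¹ ∅`, read as a coalgebra for `F_I`. -/
def step : (n : ℕ) → initialChain F I n → I ⊕ F.obj (initialChain F I n)
  | 0 => PEmpty.elim
  | n + 1 => mapFI F I (step n)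

def lift {X : Type u} (x : I ⊕ F.obj X → X) : (n : ℕ) → initialChain F I n → X
  | 0 => PEmpty.elim
  | n + 1 => x ∘ mapFI F I (lift x n)

theorem step_succ (n : ℕ) : step F I (n + 1) = mapFI F I (step F I n) := rfl

theorem lift_succ {X : Type u} (x : I ⊕ F.obj X → X) (n : ℕ) :
    lift x (n + 1) = x ∘ mapFI F I (lift x n) := rfl

theorem lift_comp_step {X : Type u} (x : I ⊕ F.obj X → X) :
    ∀ n, lift x (n + 1) ∘ step F I n = lift x n
  | 0 => funext fun s => s.elim
  | n + 1 => by
    rw [lift_succ, step_succ, comp_assoc, ← mapFI_comp, lift_comp_step x n, ← lift_succ]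

theorem isCoalgToAlgHom_lift {X : Type u} (x : I ⊕ F.obj X → X) (n : ℕ) :
    IsCoalgToAlgHom (step F I n) x (lift x n) :=
  fun s => congrFun (lift_comp_step x n).symm s

theorem eq_lift {X : Type u} {x : I ⊕ F.obj X → X} :
    ∀ {n} {f : initialChain F I n → X}, IsCoalgToAlgHom (step F I n) x f → f = lift x n
  | 0, _, _ => funext fun s => s.elim
  | n + 1, f, hf => by
    have hstep : f ∘ step F I n = lift x n := eq_lift fun s => by
      rw [comp_apply, hf, step_succ, mapFI_comp]
      rfl
    funext s
    rw [hf s, step_succ, ← comp_apply (f := mapFI F I f), ← mapFI_comp, hstep, lift_succ]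
    rfl

theorem recursiveSet (n : ℕ) : RecursiveSet F I (step F I n) := fun _ x =>
  ⟨lift x n, isCoalgToAlgHom_lift x n, fun _ hf => eq_lift hf⟩

theorem finite (hI : Finite I) (hF : ∀ X : Type u, Finite X → Finite (F.obj X)) :
    ∀ n, Finite (initialChain F I n)
  | 0 => inferInstanceAs (Finite PEmpty)
  | n + 1 =>
    have := hF _ (finite hI hF n)
    inferInstanceAs (Finite (I ⊕ F.obj (initialChain F I n)))

variable (F I) in
def diagram : ℕ ⥤ Type u :=
  Functor.ofSequence fun n => TypeCat.ofHom (step F I n)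

def cocone {X : Type u} (x : I ⊕ F.obj X → X) : Cocone (diagram F I) where
  pt := X
  ι := NatTrans.ofSequence (fun n => TypeCat.ofHom (lift x n)) fun n => by
    unfold diagram
    rw [Functor.ofSequence_map_homOfLE_succ]
    ext s
    exact congrFun (lift_comp_step x n) s

/-- The images of the stages form a subalgebra, since `F` is finitary. -/
theorem exists_lift_eq [PreservesColimitsOfShape ℕ F] {A : Type u} {a : I ⊕ F.obj A → A}
    (ha : IsInitialAlg a) (t : A) : ∃ n s, lift a n s = t := by
  have hU (z : I ⊕ F.obj (⋃ n, Set.range (lift a n))) :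
      a (mapFI F I Subtype.val z) ∈ ⋃ n, Set.range (lift a n) := by
    rcases z with i | w
    · exact Set.mem_iUnion.2 ⟨1, Sum.inl i, rfl⟩
    · obtain ⟨n, v, hv⟩ := Functor.exists_map_eq_of_mem_iUnion_range (cocone a) w
      exact Set.mem_iUnion.2 ⟨n + 1, Sum.inr v, congrArg (a ∘ Sum.inr) hv.symm⟩
  simpa using ha.mem_of_closed hU t

end initialChain

end FIAlgebras

/-- Language equivalence via finite recursion: for a finitary `Set` functor `F` preserving
finite sets and finite `I`, two automata have equal languages `TI → O` iff their
`ρ`-restricted languages agree for every recursive coalgebra `ρ : S → F_I S` with `S` finite.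
Here `TI` is the initial `F_I`-algebra with structure `a`, and the reachability maps are the
unique `F_I`-algebra morphisms out of it. -/
theorem stmt13 (F : Type u ⥤ Type u)
    [Limits.PreservesFilteredColimits F]
    (hFfin : ∀ X : Type u, Finite X → Finite (F.obj X))
    (I : Type u) (hI : Finite I) (O : Type u)
    (TI : Type u) (a : I ⊕ F.obj TI → TI)
    (hinit : ∀ (X : Type u) (x : I ⊕ F.obj X → X),
      ∃! h : TI → X, ∀ y, h (a y) = x (Sum.map id (F.map (TypeCat.ofHom h)) y))
    (Qt : Type u) (δt : F.obj Qt → Qt) (it : I → Qt) (ot : Qt → O)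
    (Q : Type u) (δ : F.obj Q → Q) (i : I → Q) (o : Q → O)
    (reacht : TI → Qt)
    (hreacht : ∀ y, reacht (a y) = Sum.elim it δt (Sum.map id (F.map (TypeCat.ofHom reacht)) y))
    (reach : TI → Q)
    (hreach : ∀ y, reach (a y) = Sum.elim i δ (Sum.map id (F.map (TypeCat.ofHom reach)) y)) :
    (∀ t, ot (reacht t) = o (reach t)) ↔
      ∀ (S : Type u), Finite S → ∀ ρ : S → I ⊕ F.obj S, RecursiveSet F I ρ →
        ∀ (f : S → Qt) (g : S → Q),
          (∀ s, f s = Sum.elim it δt (Sum.map id (F.map (TypeCat.ofHom f)) (ρ s))) →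
          (∀ s, g s = Sum.elim i δ (Sum.map id (F.map (TypeCat.ofHom g)) (ρ s))) →
          ∀ s, ot (f s) = o (g s) := by
  constructor
  · intro hL S _ ρ hρ f g hf hg s
    obtain ⟨e, he, -⟩ := hρ TI a
    rw [hρ.eq_comp he hreacht hf, hρ.eq_comp he hreach hg]
    exact hL (e s)
  · intro hR t
    have := preservesSmallestFilteredColimits_of_preservesFilteredColimits F
    obtain ⟨n, s, rfl⟩ := initialChain.exists_lift_eq hinit t
    exact hR _ (initialChain.finite hI hFfin n) _ (initialChain.recursiveSet n) _ _
      ((initialChain.isCoalgToAlgHom_lift a n).comp hreacht)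
      ((initialChain.isCoalgToAlgHom_lift a n).comp hreach) s
end

section
/- Suppose W = (α, β) is a closed and consistent wrapper and W' = (α', β) is another wrapper with the same β such that α^◁ and α'^◁ are isomorphic subobjects of Q_t. Then W' is also closed and consistent, and its hypothesis H_{W'} is isomorphic to H_W. -/
open CategoryTheory

/-- If `W = (α, β)` is a closed and consistent wrapper and `W' = (α', β)` is a wrapper with the
same `β` such that `α^◁` and `α'^◁` are isomorphic subobjects of `Q_t`, then `W'` is also
closed and consistent, and the hypothesis state spaces `H_W` and `H_{W'}` are isomorphic
(compatibly with their inclusions into `P`). -/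
theorem stmt15 {C : Type*} [Category C]
    (E M : MorphismProperty C)
    (hE : ∀ {X Y : C} (f : X ⟶ Y), E f → Epi f)
    (hM : ∀ {X Y : C} (f : X ⟶ Y), M f → Mono f)
    (fac : ∀ {X Y : C} (f : X ⟶ Y),
      ∃ (Z : C) (e : X ⟶ Z) (m : Z ⟶ Y), E e ∧ M m ∧ e ≫ m = f)
    (fill : ∀ {X Y Z W : C} (e : X ⟶ Y) (m : Z ⟶ W) (f : X ⟶ Z) (g : Y ⟶ W),
      E e → M m → f ≫ m = e ≫ g → ∃! d : Y ⟶ Z, e ≫ d = f ∧ d ≫ m = g)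
    (F : C ⥤ C) (I O : C)
    (hFE : ∀ {X Y : C} (f : X ⟶ Y), E f → E (F.map f))
    (Qt : C) (δt : F.obj Qt ⟶ Qt) (it : I ⟶ Qt) (ot : Qt ⟶ O)
    (S S' : C) (α : S ⟶ Qt) (α' : S' ⟶ Qt) (P : C) (β : Qt ⟶ P)
    -- factorisations of α and α'
    (Xα : C) (eα : S ⟶ Xα) (mα : Xα ⟶ Qt) (heα : E eα) (hmα : M mα) (hfα : eα ≫ mα = α)
    (Xα' : C) (eα' : S' ⟶ Xα') (mα' : Xα' ⟶ Qt)
    (heα' : E eα') (hmα' : M mα') (hfα' : eα' ≫ mα' = α')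
    -- α^◁ and α'^◁ are isomorphic subobjects
    (φ : Xα ⟶ Xα') (hφ : φ ≫ mα' = mα) (ψ : Xα' ⟶ Xα) (hψ : ψ ≫ mα = mα')
    -- factorisations of τ_W and τ_{W'}
    (H : C) (e : S ⟶ H) (m : H ⟶ P) (he : E e) (hm : M m) (hem : e ≫ m = α ≫ β)
    (H' : C) (e' : S' ⟶ H') (m' : H' ⟶ P) (he' : E e') (hm' : M m')
    (hem' : e' ≫ m' = α' ≫ β)
    -- W is closed and consistent
    (hclosed : (∃ iW : I ⟶ H, iW ≫ m = it ≫ β) ∧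
      (∃ cl : F.obj S ⟶ H, cl ≫ m = F.map α ≫ δt ≫ β))
    (hcons : (∃ oW : H ⟶ O, e ≫ oW = α ≫ ot) ∧
      (∃ cs : F.obj H ⟶ P, F.map e ≫ cs = F.map α ≫ δt ≫ β)) :
    ((∃ iW' : I ⟶ H', iW' ≫ m' = it ≫ β) ∧
      (∃ cl' : F.obj S' ⟶ H', cl' ≫ m' = F.map α' ≫ δt ≫ β)) ∧
    ((∃ oW' : H' ⟶ O, e' ≫ oW' = α' ≫ ot) ∧
      (∃ cs' : F.obj H' ⟶ P, F.map e' ≫ cs' = F.map α' ≫ δt ≫ β)) ∧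
    (∃ θ : H ≅ H', θ.hom ≫ m' = m) := by
  obtain ⟨⟨iW, hiW⟩, ⟨cl, hcl⟩⟩ := hclosed
  obtain ⟨⟨oW, hoW⟩, ⟨cs, hcs⟩⟩ := hcons
  -- d : Xα ⟶ H with eα ≫ d = e, d ≫ m = mα ≫ β
  obtain ⟨d, ⟨hd1, hd2⟩, -⟩ := fill eα m e (mα ≫ β) heα hm (by rw [hem, ← hfα]; simp)
  -- d' : Xα' ⟶ H' with eα' ≫ d' = e', d' ≫ m' = mα' ≫ β
  obtain ⟨d', ⟨hd1', hd2'⟩, -⟩ := fill eα' m' e' (mα' ≫ β) heα' hm'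
    (by rw [hem', ← hfα']; simp)
  -- u : H ⟶ H' with e ≫ u = eα ≫ φ ≫ d', u ≫ m' = m
  obtain ⟨u, ⟨hu1, hu2⟩, -⟩ := fill e m' (eα ≫ φ ≫ d') m he hm'
    (by rw [Category.assoc, Category.assoc, hd2', ← Category.assoc φ, hφ, hem, ← hfα]; simp)
  -- v : H' ⟶ H with e' ≫ v = eα' ≫ ψ ≫ d, v ≫ m = m'
  obtain ⟨v, ⟨hv1, hv2⟩, -⟩ := fill e' m (eα' ≫ ψ ≫ d) m' he' hm
    (by rw [Category.assoc, Category.assoc, hd2, ← Category.assoc ψ, hψ, hem', ← hfα']; simp)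
  haveI : Mono m := hM m hm
  haveI : Mono m' := hM m' hm'
  haveI : Epi eα := hE eα heα
  haveI : Epi (F.map eα) := hE _ (hFE eα heα)
  have huv : u ≫ v = 𝟙 H := by
    rw [← cancel_mono m, Category.assoc, hv2, hu2, Category.id_comp]
  have hvu : v ≫ u = 𝟙 H' := by
    rw [← cancel_mono m', Category.assoc, hu2, hv2, Category.id_comp]
  -- k : F Xα ⟶ H with F eα ≫ k = cl, k ≫ m = F mα ≫ δt ≫ β
  obtain ⟨k, ⟨hk1, hk2⟩, -⟩ := fill (F.map eα) m cl (F.map mα ≫ δt ≫ β)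
    (hFE eα heα) hm (by rw [hcl, ← hfα, F.map_comp]; simp)
  have hφψ : F.map ψ ≫ F.map mα = F.map mα' := by rw [← F.map_comp, hψ]
  refine ⟨⟨⟨iW ≫ u, by rw [Category.assoc, hu2, hiW]⟩,
    ⟨F.map eα' ≫ F.map ψ ≫ k ≫ u, ?_⟩⟩,
    ⟨⟨v ≫ oW, ?_⟩, ⟨F.map v ≫ cs, ?_⟩⟩,
    ⟨⟨u, v, huv, hvu⟩, hu2⟩⟩
  · rw [Category.assoc, Category.assoc, Category.assoc, hu2, hk2,
      ← Category.assoc (F.map ψ), hφψ, ← hfα', F.map_comp]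
    simp
  · have hdo : d ≫ oW = mα ≫ ot := by
      rw [← cancel_epi eα, ← Category.assoc, hd1, hoW, ← hfα]; simp
    rw [← Category.assoc, hv1, Category.assoc, Category.assoc, hdo,
      ← Category.assoc ψ, hψ, ← hfα']; simp
  · have hdc : F.map d ≫ cs = F.map mα ≫ δt ≫ β := by
      rw [← cancel_epi (F.map eα), ← F.map_comp_assoc, hd1, hcs, ← hfα, F.map_comp]
      simp
    rw [← F.map_comp_assoc, hv1, F.map_comp, F.map_comp, Category.assoc,
      Category.assoc, hdc, ← Category.assoc (F.map ψ), hφψ, ← hfα', F.map_comp]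
    simp
end

section
/- Let F : Set → Set preserve weak pullbacks and let S be a finite set, E ⊆ E' ⊆ T(I+1). If for all s, s' ∈ S with (β_{E'} ∘ α_S)(s) = (β_{E'} ∘ α_S)(s') one has both (o_t ∘ α_S)(s) = (o_t ∘ α_S)(s') and β_E ∘ δ_t ∘ F(α_S ∘ [id_S, 1_s]) = β_E ∘ δ_t ∘ F(α_S ∘ [id_S, 1_{s'}]) (as maps F(S+1) → O^E), then the wrapper (α_S, β_{E'}) is locally consistent with respect to β_E. -/
open CategoryTheory

universe u

/-!
Two row labels with equal `E'`-rows may be exchanged inside a one-hole context `F(S + 1)` without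
changing the successor row over `E`. Since `S` is finite, any two maps `P → S` that agree up to
equal rows are connected by finitely many such single exchanges, so `β_E ∘ δ_t ∘ F α_S` is
constant on the fibres of `F τ_W`; composing with `F` of a section of `τ_W` onto its image `H_W`
then gives `lcons`, and the same section gives `o_W`.
-/

lemma Set.exists_comp_rangeFactorization_eq {S Y Z : Type*} {k : S → Y} {φ : S → Z}
    (hφ : ∀ s s', k s = k s' → φ s = φ s') :
    ∃ ψ : Set.range k → Z, ψ ∘ Set.rangeFactorization k = φ :=
  ⟨φ ∘ Set.rangeSplitting k, funext fun _ => hφ _ _ (Set.apply_rangeSplitting k _)⟩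

namespace CategoryTheory.Functor

variable (F : Type u ⥤ Type u)

lemma map_ofHom_comp_apply {X Y Z : Type u} (f : X → Y) (g : Y → Z) (x : F.obj X) :
    F.map (TypeCat.ofHom (g ∘ f)) x = F.map (TypeCat.ofHom g) (F.map (TypeCat.ofHom f) x) :=
  F.map_comp_apply (TypeCat.ofHom f) (TypeCat.ofHom g) x

/-- `Sum.elim id fun _ => s` is the paper's `[id_S, 1_s]`, filling the hole of a context in
`F (S ⊕ 1)` with `s`. -/
def SubstInvariant {S X Y : Type u} (ρ : F.obj S → X) (k : S → Y) : Prop :=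
  ∀ s s', k s = k s' → ∀ x : F.obj (S ⊕ PUnit.{u + 1}),
    ρ (F.map (TypeCat.ofHom (Sum.elim id fun _ => s)) x) =
      ρ (F.map (TypeCat.ofHom (Sum.elim id fun _ => s')) x)

namespace SubstInvariant

variable {F} {S X Y : Type u} {ρ : F.obj S → X} {k : S → Y}

lemma map_update {P : Type u} [DecidableEq P] (hρ : SubstInvariant F ρ k) (f : P → S) (a : P)
    {s : S} (hs : k (f a) = k s) (w : F.obj P) :
    ρ (F.map (TypeCat.ofHom (Function.update f a s)) w) = ρ (F.map (TypeCat.ofHom f) w) := by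
  let hole : P → S ⊕ PUnit.{u + 1} := fun p => if p = a then .inr PUnit.unit else .inl (f p)
  have hf : f = Sum.elim id (fun _ => f a) ∘ hole := by
    funext p; by_cases hp : p = a <;> simp [hole, hp]
  have hupdate : Function.update f a s = Sum.elim id (fun _ => s) ∘ hole := by
    funext p; by_cases hp : p = a <;> simp [hole, hp]
  rw [hupdate, map_ofHom_comp_apply, ← hρ _ _ hs, ← map_ofHom_comp_apply, ← hf]

lemma map_eq_of_comp_eq {P : Type u} [Finite P] (hρ : SubstInvariant F ρ k) {f g : P → S}
    (hfg : k ∘ f = k ∘ g) (w : F.obj P) :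
    ρ (F.map (TypeCat.ofHom f) w) = ρ (F.map (TypeCat.ofHom g) w) := by
  classical
  have : Fintype P := Fintype.ofFinite P
  suffices key : ∀ D : Finset P, ∀ f' : P → S, (∀ p, k (f' p) = k (g p)) → (∀ p ∉ D, f' p = g p) →
      ρ (F.map (TypeCat.ofHom f') w) = ρ (F.map (TypeCat.ofHom g) w) from
    key Finset.univ f (congrFun hfg) fun p hp => absurd (Finset.mem_univ p) hp
  intro D
  induction D using Finset.induction_on with
  | empty =>
    intro f' _ hagree
    rw [funext fun p => hagree p (Finset.notMem_empty p)]
  | insert a D _ ih =>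
    intro f' hrel hagree
    rw [← map_update hρ f' a (hrel a)]
    refine ih _ (fun p => ?_) (fun p hp => ?_)
    · by_cases hp : p = a
      · subst hp; simp
      · simp [hp, hrel]
    · by_cases hpa : p = a
      · subst hpa; simp
      · simp [hpa, hagree p (by simp [hpa, hp])]

lemma exists_map_rangeFactorization_eq [Finite S] (hρ : SubstInvariant F ρ k) :
    ∃ ψ : F.obj (Set.range k) → X,
      ∀ y, ψ (F.map (TypeCat.ofHom (Set.rangeFactorization k)) y) = ρ y := by
  have hsplit : k ∘ (Set.rangeSplitting k ∘ Set.rangeFactorization k) = k ∘ id :=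
    funext fun s => Set.apply_rangeSplitting k (Set.rangeFactorization k s)
  refine ⟨fun x => ρ (F.map (TypeCat.ofHom (Set.rangeSplitting k)) x), fun y => ?_⟩
  dsimp only
  rw [← map_ofHom_comp_apply, hρ.map_eq_of_comp_eq hsplit]
  exact congrArg ρ (F.map_id_apply S y)

end SubstInvariant

end CategoryTheory.Functor

theorem stmt16_general (F : Type u ⥤ Type u)
    (T : CategoryTheory.Monad (Type u))
    (I O Qt : Type u)
    (δt : F.obj Qt → Qt) (ot : Qt → O)
    (sh : Qt → T.obj (I ⊕ PUnit.{u + 1}) → Qt)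
    (S : Set (T.obj I)) (hS : S.Finite)
    (E E' : Set (T.obj (I ⊕ PUnit.{u + 1}))) (hEE' : E ⊆ E')
    -- α_S, the restricted reachability map
    (αS : S → Qt)
    -- the rows over E' and over E
    (βE' : Qt → (E' → O))
    (hβE' : ∀ q (e : E'), βE' q e = ot (sh q (e : T.obj (I ⊕ PUnit.{u + 1}))))
    (βE : Qt → (E → O))
    (hβE : ∀ q (e : E), βE q e = ot (sh q (e : T.obj (I ⊕ PUnit.{u + 1}))))
    -- main hypothesis: equal E'-rows imply equal outputs and equal successor rows over E
    (hmain : ∀ s s' : S, βE' (αS s) = βE' (αS s') →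
      ot (αS s) = ot (αS s') ∧
      ∀ x : F.obj (S ⊕ PUnit.{u + 1}),
        βE (δt (F.map (TypeCat.ofHom (fun y : S ⊕ PUnit.{u + 1} => αS (Sum.elim id (fun _ => s) y))) x)) =
          βE (δt (F.map (TypeCat.ofHom (fun y : S ⊕ PUnit.{u + 1} => αS (Sum.elim id (fun _ => s') y))) x))) :
    -- conclusion: (α_S, β_{E'}) is locally consistent w.r.t. β_E
    (∀ q q' : Qt, βE' q = βE' q' → βE q = βE q') ∧
    (∃ oW : Set.range (fun s : S => βE' (αS s)) → O,
      ∀ s : S, oW ⟨βE' (αS s), ⟨s, rfl⟩⟩ = ot (αS s)) ∧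
    (∃ lcons : F.obj (Set.range (fun s : S => βE' (αS s))) → (E → O),
      ∀ y : F.obj S,
        lcons (F.map (TypeCat.ofHom (fun s : S =>
            (⟨βE' (αS s), ⟨s, rfl⟩⟩ : Set.range (fun s : S => βE' (αS s))))) y) =
          βE (δt (F.map (TypeCat.ofHom αS) y))) := by
  have : Finite S := hS.to_subtype
  have hsubst : F.SubstInvariant (fun y => βE (δt (F.map (TypeCat.ofHom αS) y)))
      (fun s => βE' (αS s)) := fun s s' hss' x => by
    simpa only [← Functor.map_ofHom_comp_apply] using (hmain s s' hss').2 x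
  obtain ⟨oW, hoW⟩ := Set.exists_comp_rangeFactorization_eq fun s s' hss' => (hmain s s' hss').1
  refine ⟨fun q q' hqq' => funext fun e => ?_, ⟨oW, congrFun hoW⟩,
    hsubst.exists_map_rangeFactorization_eq⟩
  rw [hβE, hβE, ← hβE' q ⟨e, hEE' e.2⟩, ← hβE' q' ⟨e, hEE' e.2⟩, hqq']

/-- Local consistency for `Set` automata: let `F` preserve weak pullbacks, `S` be finite and
`E ⊆ E' ⊆ T(I+1)`. If any two row labels `s, s' ∈ S` with equal `E'`-rows have equal outputs
and equal one-step-context successor rows over `E`, then the contextual wrapper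
`(α_S, β_{E'})` is locally consistent with respect to `β_E`. -/
theorem stmt16 (F : Type u ⥤ Type u)
    (hwpb : ∀ {X Y Z : Type u} (f : X → Z) (g : Y → Z) (u : F.obj X) (v : F.obj Y),
      F.map (TypeCat.ofHom f) u = F.map (TypeCat.ofHom g) v →
      ∃ w : F.obj {p : X × Y // f p.1 = g p.2},
        F.map (TypeCat.ofHom (fun p => p.1.1)) w = u ∧ F.map (TypeCat.ofHom (fun p => p.1.2)) w = v)
    (T : CategoryTheory.Monad (Type u))
    (γ : ∀ X : Type u, F.obj (T.obj X) → T.obj X)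
    (hfree : ∀ (X Z : Type u) (z : F.obj Z → Z) (f : X → Z),
      ∃! g : T.obj X → Z,
        (∀ a, g (T.η.app X a) = f a) ∧ (∀ b, g (γ X b) = z (F.map (TypeCat.ofHom g) b)))
    (I O Qt : Type u)
    (δt : F.obj Qt → Qt) (it : I → Qt) (ot : Qt → O)
    (reach : T.obj I → Qt)
    (hreach1 : ∀ a, reach (T.η.app I a) = it a)
    (hreach2 : ∀ b, reach (γ I b) = δt (F.map (TypeCat.ofHom reach) b))
    (sh : Qt → T.obj (I ⊕ PUnit.{u + 1}) → Qt)
    (hsh1 : ∀ q a, sh q (T.η.app (I ⊕ PUnit.{u + 1}) a) = Sum.elim it (fun _ => q) a)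
    (hsh2 : ∀ q b, sh q (γ (I ⊕ PUnit.{u + 1}) b) = δt (F.map (TypeCat.ofHom (sh q)) b))
    (S : Set (T.obj I)) (hS : S.Finite)
    (E E' : Set (T.obj (I ⊕ PUnit.{u + 1}))) (hEE' : E ⊆ E')
    -- α_S, the restricted reachability map
    (αS : S → Qt) (hαS : ∀ s : S, αS s = reach (s : T.obj I))
    -- the rows over E' and over E
    (βE' : Qt → (E' → O))
    (hβE' : ∀ q (e : E'), βE' q e = ot (sh q (e : T.obj (I ⊕ PUnit.{u + 1}))))
    (βE : Qt → (E → O))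
    (hβE : ∀ q (e : E), βE q e = ot (sh q (e : T.obj (I ⊕ PUnit.{u + 1}))))
    -- main hypothesis: equal E'-rows imply equal outputs and equal successor rows over E
    (hmain : ∀ s s' : S, βE' (αS s) = βE' (αS s') →
      ot (αS s) = ot (αS s') ∧
      ∀ x : F.obj (S ⊕ PUnit.{u + 1}),
        βE (δt (F.map (TypeCat.ofHom (fun y : S ⊕ PUnit.{u + 1} => αS (Sum.elim id (fun _ => s) y))) x)) =
          βE (δt (F.map (TypeCat.ofHom (fun y : S ⊕ PUnit.{u + 1} => αS (Sum.elim id (fun _ => s') y))) x))) :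
    -- conclusion: (α_S, β_{E'}) is locally consistent w.r.t. β_E
    (∀ q q' : Qt, βE' q = βE' q' → βE q = βE q') ∧
    (∃ oW : Set.range (fun s : S => βE' (αS s)) → O,
      ∀ s : S, oW ⟨βE' (αS s), ⟨s, rfl⟩⟩ = ot (αS s)) ∧
    (∃ lcons : F.obj (Set.range (fun s : S => βE' (αS s))) → (E → O),
      ∀ y : F.obj S,
        lcons (F.map (TypeCat.ofHom (fun s : S =>
            (⟨βE' (αS s), ⟨s, rfl⟩⟩ : Set.range (fun s : S => βE' (αS s))))) y) =
          βE (δt (F.map (TypeCat.ofHom αS) y))) :=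
  stmt16_general F T I O Qt δt ot sh S hS E E' hEE' αS βE' hβE' βE hβE hmain
end

section
/- Let W = (α : S → Q_t, β : Q_t → P) be a closed and consistent wrapper and ρ : S' → F_I S' a recursive coalgebra. If the extended wrapper W' = ([α, [i_t, δ_t]^ρ] : S + S' → Q_t, β) is also closed and consistent, then W is correct up to ρ, i.e., o_W ∘ [i_W, δ_W]^ρ = o_t ∘ [i_t, δ_t]^ρ (the ρ-restricted language of the hypothesis H_W equals that of the target). -/
open CategoryTheory Limits

/-! Since `α` factors through `[α, f]`, unique diagonal fill-in gives a comparison `ψ : H_W → H_W'`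
from the hypothesis of `W` to that of `W'`, and `ψ` preserves initial states, transitions and
outputs. The recursive coalgebra `ρ` has exactly one coalgebra-to-algebra morphism into `H_W'`.
Both `[i_W, δ_W]^ρ ≫ ψ` and the `S'`-component of `e'` are such morphisms; the latter computes the
target's outputs on `S'` because `W'` is consistent. -/

namespace CategoryTheory

variable {C : Type*} [Category C]

section CoalgebraToAlgebra

variable (G : C ⥤ C) {S' : C} (ρ : S' ⟶ G.obj S')

def IsCoalgToAlgHom {X : C} (a : G.obj X ⟶ X) (u : S' ⟶ X) : Prop :=
  u = ρ ≫ G.map u ≫ a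

def IsRecursiveCoalg : Prop :=
  ∀ (X : C) (a : G.obj X ⟶ X), ∃! u : S' ⟶ X, IsCoalgToAlgHom G ρ a u

variable {G ρ}

theorem IsRecursiveCoalg.coalgToAlgHom_unique (hρ : IsRecursiveCoalg G ρ) {X : C}
    {a : G.obj X ⟶ X} {u v : S' ⟶ X} (hu : IsCoalgToAlgHom G ρ a u)
    (hv : IsCoalgToAlgHom G ρ a v) : u = v :=
  (hρ X a).unique hu hv

theorem IsCoalgToAlgHom.comp_algHom {X Y : C} {a : G.obj X ⟶ X} {b : G.obj Y ⟶ Y}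
    {u : S' ⟶ X} (hu : IsCoalgToAlgHom G ρ a u) {h : X ⟶ Y} (hh : a ≫ h = G.map h ≫ b) :
    IsCoalgToAlgHom G ρ b (u ≫ h) := by
  unfold IsCoalgToAlgHom at hu ⊢
  conv_lhs => rw [hu]
  simp [hh]

theorem IsCoalgToAlgHom.of_comp_mono {Q Y P : C} {a : G.obj Q ⟶ Q} {b : G.obj Y ⟶ Y}
    {u : S' ⟶ Q} (hu : IsCoalgToAlgHom G ρ a u) {v : S' ⟶ Y} {m : Y ⟶ P} [Mono m]
    {β : Q ⟶ P} (hv : v ≫ m = u ≫ β) (hb : G.map v ≫ b ≫ m = G.map u ≫ a ≫ β) :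
    IsCoalgToAlgHom G ρ b v := by
  unfold IsCoalgToAlgHom at hu ⊢
  rw [← cancel_mono m, hv]
  conv_lhs => rw [hu]
  simp [hb]

end CoalgebraToAlgebra

section Automata

variable [HasBinaryCoproducts C] {F : C ⥤ C} {I : C}

theorem FIfun_map_comp_desc_comp {X Y Z : C} (h : X ⟶ Y) (i : I ⟶ Y) (δ : F.obj Y ⟶ Y)
    (k : Y ⟶ Z) :
    (FIfun F I).map h ≫ (coprod.desc i δ : (FIfun F I).obj Y ⟶ Y) ≫ k =
      coprod.desc (i ≫ k) (F.map h ≫ δ ≫ k) := by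
  apply coprod.hom_ext <;> simp [FIfun]

theorem desc_comp_eq_FIfun_map_comp_desc {X Y : C} {i : I ⟶ X} {δ : F.obj X ⟶ X}
    {i' : I ⟶ Y} {δ' : F.obj Y ⟶ Y} {h : X ⟶ Y} (hi : i ≫ h = i') (hδ : δ ≫ h = F.map h ≫ δ') :
    coprod.desc i δ ≫ h = (FIfun F I).map h ≫ coprod.desc i' δ' := by
  apply coprod.hom_ext <;> simp [FIfun, hi, hδ]

end Automata

theorem comp_diag_eq_map_comp_diag {S S₁ H H₁ P : C} (F : C ⥤ C)
    {e : S ⟶ H} {m : H ⟶ P} {e₁ : S₁ ⟶ H₁} {m₁ : H₁ ⟶ P} [Epi (F.map e)] [Mono m₁]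
    {j : S ⟶ S₁} {ψ : H ⟶ H₁} (hψe : e ≫ ψ = j ≫ e₁) (hψm : ψ ≫ m₁ = m)
    {δ : F.obj H ⟶ H} {δ₁ : F.obj H₁ ⟶ H₁} {t : F.obj S₁ ⟶ P}
    (hδ : F.map e ≫ δ ≫ m = F.map j ≫ t) (hδ₁ : F.map e₁ ≫ δ₁ ≫ m₁ = t) :
    δ ≫ ψ = F.map ψ ≫ δ₁ := by
  rw [← cancel_epi (F.map e), ← cancel_mono m₁]
  simp only [Category.assoc, hψm, hδ]
  rw [← F.map_comp_assoc, hψe, F.map_comp_assoc, hδ₁]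

end CategoryTheory

theorem stmt18_general {C : Type*} [Category C] [HasBinaryCoproducts C]
    (E M : MorphismProperty C)
    (hE : ∀ {X Y : C} (f : X ⟶ Y), E f → Epi f)
    (hM : ∀ {X Y : C} (f : X ⟶ Y), M f → Mono f)
    (fill : ∀ {X Y Z W : C} (e : X ⟶ Y) (m : Z ⟶ W) (f : X ⟶ Z) (g : Y ⟶ W),
      E e → M m → f ≫ m = e ≫ g → ∃! d : Y ⟶ Z, e ≫ d = f ∧ d ≫ m = g)
    (F : C ⥤ C) (I O : C)
    (hFE : ∀ {X Y : C} (f : X ⟶ Y), E f → E (F.map f))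
    (Qt : C) (δt : F.obj Qt ⟶ Qt) (it : I ⟶ Qt) (ot : Qt ⟶ O)
    (S : C) (α : S ⟶ Qt) (P : C) (β : Qt ⟶ P)
    -- factorisation of τ_W = α ≫ β through H
    (H : C) (e : S ⟶ H) (m : H ⟶ P) (he : E e) (hem : e ≫ m = α ≫ β)
    -- W is closed and consistent, with hypothesis structure (i_W, δ_W, o_W)
    (iW : I ⟶ H) (hiW : iW ≫ m = it ≫ β)
    (closeW : F.obj S ⟶ H) (hclose : closeW ≫ m = F.map α ≫ δt ≫ β)
    (oW : H ⟶ O) (hoW : e ≫ oW = α ≫ ot)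
    (δW : F.obj H ⟶ H) (hδW1 : F.map e ≫ δW = closeW)
    -- a recursive coalgebra ρ with f = [i_t, δ_t]^ρ
    (S' : C) (ρ : S' ⟶ (FIfun F I).obj S')
    (hrec : ∀ (X : C) (x : (FIfun F I).obj X ⟶ X),
      ∃! u : S' ⟶ X, u = ρ ≫ (FIfun F I).map u ≫ x)
    (f : S' ⟶ Qt) (hf : f = ρ ≫ (FIfun F I).map f ≫ coprod.desc it δt)
    -- factorisation of τ_{W'} for W' = ([α, f], β)
    (H' : C) (e' : S ⨿ S' ⟶ H') (m' : H' ⟶ P) (he' : E e') (hm' : M m')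
    (hem' : e' ≫ m' = coprod.desc α f ≫ β)
    -- W' is closed and consistent
    (hW'closed : (∃ iW' : I ⟶ H', iW' ≫ m' = it ≫ β) ∧
      (∃ cl : F.obj (S ⨿ S') ⟶ H', cl ≫ m' = F.map (coprod.desc α f) ≫ δt ≫ β))
    (hW'cons : (∃ oW' : H' ⟶ O, e' ≫ oW' = coprod.desc α f ≫ ot) ∧
      (∃ cs : F.obj H' ⟶ P, F.map e' ≫ cs = F.map (coprod.desc α f) ≫ δt ≫ β)) :
    ∀ g : S' ⟶ H, g = ρ ≫ (FIfun F I).map g ≫ coprod.desc iW δW → g ≫ oW = f ≫ ot := by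
  intro g hg
  obtain ⟨⟨iW', hiW'⟩, ⟨cl, hcl⟩⟩ := hW'closed
  obtain ⟨⟨oW', hoW'⟩, ⟨cs, hcs⟩⟩ := hW'cons
  have : Epi e := hE e he
  have : Epi (F.map e) := hE _ (hFE e he)
  have : Mono m' := hM m' hm'
  obtain ⟨δ', ⟨-, hδ'⟩, -⟩ := fill (F.map e') m' cl cs (hFE e' he') hm' (hcl.trans hcs.symm)
  obtain ⟨ψ, ⟨hψe, hψm⟩, -⟩ := fill e m' (coprod.inl ≫ e') m he hm'
    (by rw [Category.assoc, hem', coprod.inl_desc_assoc, hem])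
  have hψ_alg : coprod.desc iW δW ≫ ψ = (FIfun F I).map ψ ≫ coprod.desc iW' δ' := by
    refine desc_comp_eq_FIfun_map_comp_desc
      (by rw [← cancel_mono m', Category.assoc, hψm, hiW, hiW'])
      (comp_diag_eq_map_comp_diag F hψe hψm (t := F.map (coprod.desc α f) ≫ δt ≫ β) ?_ ?_)
    · rw [reassoc_of% hδW1, hclose, ← F.map_comp_assoc, coprod.inl_desc]
    · rw [hδ', hcs]
  have hψ_out : ψ ≫ oW' = oW := by
    rw [← cancel_epi e, reassoc_of% hψe, hoW', coprod.inl_desc_assoc, hoW]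
  have hinr : IsCoalgToAlgHom (FIfun F I) ρ (coprod.desc iW' δ') (coprod.inr ≫ e') := by
    refine IsCoalgToAlgHom.of_comp_mono hf (m := m') (β := β)
      (by rw [Category.assoc, hem', coprod.inr_desc_assoc]) ?_
    rw [FIfun_map_comp_desc_comp, FIfun_map_comp_desc_comp, hiW', hδ']
    congr 1
    rw [F.map_comp_assoc, hcs, ← F.map_comp_assoc, coprod.inr_desc]
  have hg_inr : g ≫ ψ = coprod.inr ≫ e' :=
    IsRecursiveCoalg.coalgToAlgHom_unique hrec (IsCoalgToAlgHom.comp_algHom hg hψ_alg) hinr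
  calc g ≫ oW = (g ≫ ψ) ≫ oW' := by rw [Category.assoc, hψ_out]
    _ = f ≫ ot := by rw [hg_inr, Category.assoc, hoW', coprod.inr_desc_assoc]

/-- Resolving counterexamples: if `W = (α, β)` is a closed and consistent wrapper with
hypothesis `(H, δ_W, i_W, o_W)`, `ρ : S' → F_I S'` is recursive with `f = [i_t, δ_t]^ρ`,
and the extended wrapper `W' = ([α, f], β)` is also closed and consistent, then `W` is correct
up to `ρ`: the `ρ`-restricted language of the hypothesis equals that of the target, i.e.
`[i_W, δ_W]^ρ ≫ o_W = f ≫ o_t`. -/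
theorem stmt18 {C : Type*} [Category C] [HasBinaryCoproducts C]
    (E M : MorphismProperty C)
    (hE : ∀ {X Y : C} (f : X ⟶ Y), E f → Epi f)
    (hM : ∀ {X Y : C} (f : X ⟶ Y), M f → Mono f)
    (fac : ∀ {X Y : C} (f : X ⟶ Y),
      ∃ (Z : C) (e : X ⟶ Z) (m : Z ⟶ Y), E e ∧ M m ∧ e ≫ m = f)
    (fill : ∀ {X Y Z W : C} (e : X ⟶ Y) (m : Z ⟶ W) (f : X ⟶ Z) (g : Y ⟶ W),
      E e → M m → f ≫ m = e ≫ g → ∃! d : Y ⟶ Z, e ≫ d = f ∧ d ≫ m = g)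
    (F : C ⥤ C) (I O : C)
    (hFE : ∀ {X Y : C} (f : X ⟶ Y), E f → E (F.map f))
    (Qt : C) (δt : F.obj Qt ⟶ Qt) (it : I ⟶ Qt) (ot : Qt ⟶ O)
    (S : C) (α : S ⟶ Qt) (P : C) (β : Qt ⟶ P)
    -- factorisation of τ_W = α ≫ β through H
    (H : C) (e : S ⟶ H) (m : H ⟶ P) (he : E e) (hm : M m) (hem : e ≫ m = α ≫ β)
    -- W is closed and consistent, with hypothesis structure (i_W, δ_W, o_W)
    (iW : I ⟶ H) (hiW : iW ≫ m = it ≫ β)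
    (closeW : F.obj S ⟶ H) (hclose : closeW ≫ m = F.map α ≫ δt ≫ β)
    (oW : H ⟶ O) (hoW : e ≫ oW = α ≫ ot)
    (consW : F.obj H ⟶ P) (hcons : F.map e ≫ consW = F.map α ≫ δt ≫ β)
    (δW : F.obj H ⟶ H) (hδW1 : F.map e ≫ δW = closeW) (hδW2 : δW ≫ m = consW)
    -- a recursive coalgebra ρ with f = [i_t, δ_t]^ρ
    (S' : C) (ρ : S' ⟶ (FIfun F I).obj S')
    (hrec : ∀ (X : C) (x : (FIfun F I).obj X ⟶ X),
      ∃! u : S' ⟶ X, u = ρ ≫ (FIfun F I).map u ≫ x)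
    (f : S' ⟶ Qt) (hf : f = ρ ≫ (FIfun F I).map f ≫ coprod.desc it δt)
    -- factorisation of τ_{W'} for W' = ([α, f], β)
    (H' : C) (e' : S ⨿ S' ⟶ H') (m' : H' ⟶ P) (he' : E e') (hm' : M m')
    (hem' : e' ≫ m' = coprod.desc α f ≫ β)
    -- W' is closed and consistent
    (hW'closed : (∃ iW' : I ⟶ H', iW' ≫ m' = it ≫ β) ∧
      (∃ cl : F.obj (S ⨿ S') ⟶ H', cl ≫ m' = F.map (coprod.desc α f) ≫ δt ≫ β))
    (hW'cons : (∃ oW' : H' ⟶ O, e' ≫ oW' = coprod.desc α f ≫ ot) ∧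
      (∃ cs : F.obj H' ⟶ P, F.map e' ≫ cs = F.map (coprod.desc α f) ≫ δt ≫ β)) :
    ∀ g : S' ⟶ H, g = ρ ≫ (FIfun F I).map g ≫ coprod.desc iW δW → g ≫ oW = f ≫ ot :=
  stmt18_general E M hE hM fill F I O hFE Qt δt it ot S α P β H e m he hem iW hiW closeW hclose oW
    hoW δW hδW1 S' ρ hrec f hf H' e' m' he' hm' hem' hW'closed hW'cons
end
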